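/- arXiv:2106.02081 — 2 statements merged into one kernel-verified Lean document; each statement's English description precedes it below -/
import Mathlib

section
/- With the setup of the half-bridge problem: if P has first marginal π_0 and P ≪ Q, then D_KL(P ‖ Q) = D_KL(π_0 ‖ Q_0) + ∫ D_KL(P(·|x) ‖ Q(·|x)) dπ_0(x), and this is minimized exactly when P(·|x) = Q(·|x) for π_0-a.e. x, with minimum value D_KL(π_0 ‖ Q_0). -/
open MeasureTheory ProbabilityTheory
open scoped ENNReal

/-- Kullback–Leibler divergence `∫ log (dμ/dν) dμ` (meaningful when `μ ≪ ν`). -/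
noncomputable def klDiv {α : Type*} [MeasurableSpace α] (μ ν : Measure α) : ℝ :=
  ∫ x, Real.log (μ.rnDeriv ν x).toReal ∂μ

section Aux

lemma klDiv_self_aux {β : Type*} [MeasurableSpace β] (μ : Measure β) [SigmaFinite μ] :
    klDiv μ μ = 0 := by
  rw [klDiv]
  rw [integral_congr_ae (g := fun _ => (0 : ℝ)) ?_, integral_zero]
  filter_upwards [μ.rnDeriv_self] with x hx
  simp [hx]

lemma gibbs_aux {α : Type*} [MeasurableSpace α] (μ ν : Measure α)
    [IsProbabilityMeasure μ] [IsProbabilityMeasure ν] (hμν : μ ≪ ν)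
    (hint : Integrable (fun x => Real.log (μ.rnDeriv ν x).toReal) μ) :
    0 ≤ klDiv μ ν ∧ (klDiv μ ν = 0 → μ = ν) := by
  set f := μ.rnDeriv ν with hf
  have hf_meas : Measurable f := Measure.measurable_rnDeriv μ ν
  have hf_pos : ∀ᵐ x ∂μ, 0 < f x := Measure.rnDeriv_pos hμν
  have hf_fin : ∀ᵐ x ∂μ, f x ≠ ⊤ := hμν.ae_le (Measure.rnDeriv_ne_top μ ν)
  have h_lint : ∫⁻ x, (f x)⁻¹ ∂μ ≤ 1 := by
    conv_lhs => rw [← Measure.withDensity_rnDeriv_eq μ ν hμν]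
    rw [lintegral_withDensity_eq_lintegral_mul ν hf_meas (g := fun x => (f x)⁻¹) hf_meas.inv]
    calc ∫⁻ x, (f * f⁻¹) x ∂ν ≤ ∫⁻ _, 1 ∂ν := by
          refine lintegral_mono fun x => ?_
          simp only [Pi.mul_apply, Pi.inv_apply]
          exact ENNReal.mul_inv_le_one _
      _ = 1 := by simp
  have hinv_int : Integrable (fun x => ((f x)⁻¹).toReal) μ :=
    integrable_toReal_of_lintegral_ne_top hf_meas.inv.aemeasurable
      (h_lint.trans_lt ENNReal.one_lt_top).ne
  have h_int_inv : ∫ x, ((f x)⁻¹).toReal ∂μ ≤ 1 := by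
    rw [integral_toReal (f := fun x => (f x)⁻¹) hf_meas.inv.aemeasurable ?_]
    · exact ENNReal.toReal_le_of_le_ofReal zero_le_one (by simpa using h_lint)
    · filter_upwards [hf_pos] with x hx
      simp [ENNReal.inv_lt_top, hx]
  have haux_int : Integrable (fun x => 1 - ((f x)⁻¹).toReal) μ :=
    (integrable_const 1).sub hinv_int
  have h_ptwise : ∀ᵐ x ∂μ, 1 - ((f x)⁻¹).toReal ≤ Real.log (f x).toReal := by
    filter_upwards [hf_pos, hf_fin] with x hx hx'
    have ht : 0 < (f x).toReal := ENNReal.toReal_pos hx.ne' hx'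
    have h1 : Real.log ((f x).toReal)⁻¹ ≤ ((f x).toReal)⁻¹ - 1 :=
      Real.log_le_sub_one_of_pos (by positivity)
    rw [Real.log_inv] at h1
    rw [ENNReal.toReal_inv]
    linarith
  have h_lb : 1 - ∫ x, ((f x)⁻¹).toReal ∂μ ≤ klDiv μ ν := by
    rw [klDiv]
    calc 1 - ∫ x, ((f x)⁻¹).toReal ∂μ = ∫ x, (1 - ((f x)⁻¹).toReal) ∂μ := by
          rw [integral_sub (integrable_const 1) hinv_int]; simp
      _ ≤ _ := integral_mono_ae haux_int hint h_ptwise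
  constructor
  · linarith
  · intro h0
    have h_eq_int : ∫ x, (Real.log (f x).toReal - (1 - ((f x)⁻¹).toReal)) ∂μ = 0 := by
      rw [integral_sub hint haux_int]
      have : ∫ x, (1 - ((f x)⁻¹).toReal) ∂μ = 0 := by
        have h1 : ∫ x, (1 - ((f x)⁻¹).toReal) ∂μ = 1 - ∫ x, ((f x)⁻¹).toReal ∂μ := by
          rw [integral_sub (integrable_const 1) hinv_int]; simp
        rw [klDiv] at h0
        have := h_lb
        rw [klDiv] at this
        linarith [h_lb]
      rw [this]
      rw [klDiv] at h0
      simpa using h0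
    have h_nn : 0 ≤ᵐ[μ] fun x => Real.log (f x).toReal - (1 - ((f x)⁻¹).toReal) := by
      filter_upwards [h_ptwise] with x hx
      simpa using hx
    have h_ae_eq : ∀ᵐ x ∂μ, Real.log (f x).toReal - (1 - ((f x)⁻¹).toReal) = 0 := by
      have := (integral_eq_zero_iff_of_nonneg_ae h_nn (hint.sub haux_int)).mp h_eq_int
      filter_upwards [this] with x hx using hx
    have h_f_one : f =ᵐ[μ] 1 := by
      filter_upwards [h_ae_eq, hf_pos, hf_fin] with x hx hxp hxf
      have ht : 0 < (f x).toReal := ENNReal.toReal_pos hxp.ne' hxf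
      rw [ENNReal.toReal_inv] at hx
      have htone : (f x).toReal = 1 := by
        by_contra hne
        have h1 : ((f x).toReal)⁻¹ ≠ 1 := by
          simpa [inv_eq_one] using hne
        have := Real.log_lt_sub_one_of_pos (x := ((f x).toReal)⁻¹) (by positivity) h1
        rw [Real.log_inv] at this
        linarith
      simp only [Pi.one_apply]
      rw [← ENNReal.ofReal_toReal hxf, htone]
      simp
    have hE : MeasurableSet {x | f x ≠ 1} := (hf_meas (measurableSet_singleton 1)).compl
    have hμE : μ {x | f x ≠ 1} = 0 := by
      have := h_f_one
      rw [Filter.EventuallyEq, ae_iff] at this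
      simpa using this
    have hrepr : ν.withDensity f = μ := Measure.withDensity_rnDeriv_eq μ ν hμν
    have h0E : ∫⁻ x in {x | f x ≠ 1}, f x ∂ν = 0 := by
      rw [← withDensity_apply f hE, hrepr]; exact hμE
    have hν_ae0 : ∀ᵐ x ∂ν, x ∈ {x | f x ≠ 1} → f x = 0 := by
      rw [lintegral_eq_zero_iff hf_meas] at h0E
      exact (ae_restrict_iff' hE).mp h0E
    have h_univ : (1 : ℝ≥0∞) = ∫⁻ x in {x | f x ≠ 1}, f x ∂ν
        + ∫⁻ x in {x | f x ≠ 1}ᶜ, f x ∂ν := by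
      rw [lintegral_add_compl _ hE]
      rw [← setLIntegral_univ, ← withDensity_apply f MeasurableSet.univ, hrepr]
      simp
    have h_compl : ∫⁻ x in {x | f x ≠ 1}ᶜ, f x ∂ν = ν {x | f x ≠ 1}ᶜ := by
      rw [setLIntegral_congr_fun hE.compl (fun x hx => ?_), setLIntegral_one]
      simpa using hx
    have hνEc : ν {x | f x ≠ 1}ᶜ = 1 := by
      rw [h0E, zero_add, h_compl] at h_univ
      exact h_univ.symm
    have hνE : ν {x | f x ≠ 1} = 0 := by
      have := measure_compl hE.compl (measure_ne_top ν _)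
      rw [hνEc, compl_compl, measure_univ] at this
      simpa using this
    have h_f_one' : f =ᵐ[ν] 1 := by
      rw [Filter.EventuallyEq, ae_iff]
      simpa using hνE
    calc μ = ν.withDensity f := hrepr.symm
      _ = ν.withDensity 1 := withDensity_congr_ae h_f_one'
      _ = ν := by simp

lemma klDiv_nonneg_aux {α : Type*} [MeasurableSpace α] (μ ν : Measure α)
    [IsProbabilityMeasure μ] [IsProbabilityMeasure ν] (hμν : μ ≪ ν) :
    0 ≤ klDiv μ ν := by
  by_cases h : Integrable (fun x => Real.log (μ.rnDeriv ν x).toReal) μ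
  · exact (gibbs_aux μ ν hμν h).1
  · rw [klDiv, integral_undef h]

section CompProd
variable {α β : Type*} {mα : MeasurableSpace α} {mβ : MeasurableSpace β}
  [MeasurableSpace.CountableOrCountablyGenerated α β]
  (μ ν : Measure α) (κ η : Kernel α β)
  [IsFiniteMeasure μ] [IsFiniteMeasure ν] [IsFiniteKernel κ] [IsFiniteKernel η]

lemma ae_ac_of_compProd_ac (hac : μ ⊗ₘ κ ≪ ν ⊗ₘ η) : ∀ᵐ x ∂μ, κ x ≪ η x := by
  have hS : MeasurableSet (Kernel.mutuallySingularSet κ η) :=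
    Kernel.measurableSet_mutuallySingularSet κ η
  have hQ : (ν ⊗ₘ η) (Kernel.mutuallySingularSet κ η) = 0 := by
    rw [Measure.compProd_apply hS]
    have : ∀ a, η a (Prod.mk a ⁻¹' Kernel.mutuallySingularSet κ η) = 0 := fun a =>
      Kernel.measure_mutuallySingularSetSlice κ η a
    simp [this]
  have hP : (μ ⊗ₘ κ) (Kernel.mutuallySingularSet κ η) = 0 := hac hQ
  rw [Measure.compProd_apply hS, lintegral_eq_zero_iff] at hP
  · filter_upwards [hP] with a ha
    rw [← Kernel.singularPart_eq_zero_iff_absolutelyContinuous,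
      Kernel.singularPart_eq_zero_iff_measure_eq_zero]
    exact ha
  · exact Kernel.measurable_kernel_prodMk_left hS

lemma compProd_withDensity_eq (hμν : μ ≪ ν) (hae : ∀ᵐ x ∂μ, κ x ≪ η x) :
    (ν ⊗ₘ η).withDensity (fun p => μ.rnDeriv ν p.1 * Kernel.rnDeriv κ η p.1 p.2) = μ ⊗ₘ κ := by
  have hD : Measurable (fun p : α × β => μ.rnDeriv ν p.1 * Kernel.rnDeriv κ η p.1 p.2) :=
    ((Measure.measurable_rnDeriv μ ν).comp measurable_fst).mul (Kernel.measurable_rnDeriv κ η)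
  set D := fun p : α × β => μ.rnDeriv ν p.1 * Kernel.rnDeriv κ η p.1 p.2 with hDdef
  ext s hs
  rw [withDensity_apply _ hs, Measure.compProd_apply hs]
  have hsl : ∫⁻ p in s, D p ∂(ν ⊗ₘ η)
      = ∫⁻ x, ∫⁻ y in Prod.mk x ⁻¹' s, D (x, y) ∂η x ∂ν := by
    rw [← lintegral_indicator hs, Measure.lintegral_compProd (hD.indicator hs)]
    refine lintegral_congr fun x => ?_
    rw [← lintegral_indicator (measurable_prodMk_left hs)]
    rfl
  rw [hsl]
  have h1 : ∀ᵐ x ∂ν, ∫⁻ y in Prod.mk x ⁻¹' s, μ.rnDeriv ν x * Kernel.rnDeriv κ η x y ∂η x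
      = μ.rnDeriv ν x * (Kernel.withDensity η (Kernel.rnDeriv κ η) x (Prod.mk x ⁻¹' s)) := by
    refine ae_of_all _ fun x => ?_
    rw [lintegral_const_mul _ (Kernel.measurable_rnDeriv_right κ η x),
      Kernel.withDensity_apply' _ (Kernel.measurable_rnDeriv κ η)]
  rw [lintegral_congr_ae h1]
  have h2 : ∫⁻ x, μ.rnDeriv ν x *
        (Kernel.withDensity η (Kernel.rnDeriv κ η) x (Prod.mk x ⁻¹' s)) ∂ν
      = ∫⁻ x, Kernel.withDensity η (Kernel.rnDeriv κ η) x (Prod.mk x ⁻¹' s) ∂μ := by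
    conv_rhs => rw [← Measure.withDensity_rnDeriv_eq μ ν hμν]
    rw [lintegral_withDensity_eq_lintegral_mul ν (Measure.measurable_rnDeriv μ ν)
      (Kernel.measurable_kernel_prodMk_left hs)]
    rfl
  rw [h2]
  refine lintegral_congr_ae ?_
  filter_upwards [hae] with x hx
  rw [Kernel.withDensity_rnDeriv_eq hx]

lemma rnDeriv_compProd_ae (hμν : μ ≪ ν) (hae : ∀ᵐ x ∂μ, κ x ≪ η x) :
    (μ ⊗ₘ κ).rnDeriv (ν ⊗ₘ η)
      =ᵐ[ν ⊗ₘ η] fun p => μ.rnDeriv ν p.1 * Kernel.rnDeriv κ η p.1 p.2 := by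
  have hD : Measurable (fun p : α × β => μ.rnDeriv ν p.1 * Kernel.rnDeriv κ η p.1 p.2) :=
    ((Measure.measurable_rnDeriv μ ν).comp measurable_fst).mul (Kernel.measurable_rnDeriv κ η)
  conv_lhs => rw [← compProd_withDensity_eq μ ν κ η hμν hae]
  exact Measure.rnDeriv_withDensity _ hD

end CompProd
end Aux

/-- Half-bridge decomposition and minimization: if `P` has first marginal `π₀` and `P ≪ Q`,
then `D_KL(P ‖ Q) = D_KL(π₀ ‖ Q₀) + ∫ D_KL(P(·|x) ‖ Q(·|x)) dπ₀(x)`, the value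
`D_KL(π₀ ‖ Q₀)` is a lower bound, and it is attained exactly when the disintegrations
coincide `π₀`-a.e. -/
theorem half_bridge_decomposition_and_minimizer
    {Z₀ Zrest : Type*} [MeasurableSpace Z₀] [MeasurableSpace Zrest]
    [StandardBorelSpace Zrest] [Nonempty Zrest]
    (Q : Measure (Z₀ × Zrest)) [IsProbabilityMeasure Q]
    (π₀ : Measure Z₀) [IsProbabilityMeasure π₀] (hπ₀ : π₀ ≪ Q.fst)
    (P : Measure (Z₀ × Zrest)) [IsProbabilityMeasure P]
    (hPfst : P.fst = π₀) (hPQ : P ≪ Q)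
    (hint : Integrable (fun z => Real.log (P.rnDeriv Q z).toReal) P)
    (hint_fst : Integrable (fun x => Real.log (π₀.rnDeriv Q.fst x).toReal) π₀)
    (hint_cond : Integrable (fun x => klDiv (P.condKernel x) (Q.condKernel x)) π₀) :
    klDiv P Q = klDiv π₀ Q.fst +
      ∫ x, klDiv (P.condKernel x) (Q.condKernel x) ∂π₀ ∧
    klDiv π₀ Q.fst ≤ klDiv P Q ∧
    (klDiv P Q = klDiv π₀ Q.fst ↔ ∀ᵐ x ∂π₀, P.condKernel x = Q.condKernel x) := by
  classical
  set κ := P.condKernel with hκdef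
  set η := Q.condKernel with hηdef
  have hP' : π₀ ⊗ₘ κ = P := by rw [← hPfst, hκdef]; exact P.disintegrate P.condKernel
  have hQ' : Q.fst ⊗ₘ η = Q := Q.disintegrate Q.condKernel
  have hacP : π₀ ⊗ₘ κ ≪ Q.fst ⊗ₘ η := by rw [hP', hQ']; exact hPQ
  have hae : ∀ᵐ x ∂π₀, κ x ≪ η x := ae_ac_of_compProd_ac π₀ Q.fst κ η hacP
  -- the rnDeriv factorization
  have hD : P.rnDeriv Q
      =ᵐ[Q] fun p => π₀.rnDeriv Q.fst p.1 * Kernel.rnDeriv κ η p.1 p.2 := by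
    conv_lhs => rw [← hP', ← hQ']
    conv in ae Q => rw [← hQ']
    exact rnDeriv_compProd_ae π₀ Q.fst κ η hπ₀ hae
  have hDP : P.rnDeriv Q
      =ᵐ[P] fun p => π₀.rnDeriv Q.fst p.1 * Kernel.rnDeriv κ η p.1 p.2 := hPQ.ae_le hD
  -- positivity and finiteness facts
  have h1 : ∀ᵐ z ∂P, 0 < π₀.rnDeriv Q.fst z.1 ∧ π₀.rnDeriv Q.fst z.1 ≠ ⊤ := by
    have hbase : ∀ᵐ x ∂π₀, 0 < π₀.rnDeriv Q.fst x ∧ π₀.rnDeriv Q.fst x ≠ ⊤ :=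
      (Measure.rnDeriv_pos hπ₀).and (hπ₀.ae_le (Measure.rnDeriv_ne_top π₀ Q.fst))
    have hmap : P.map Prod.fst = π₀ := by rw [← hPfst]; rfl
    exact ae_of_ae_map (f := Prod.fst) measurable_fst.aemeasurable
      (p := fun x => 0 < π₀.rnDeriv Q.fst x ∧ π₀.rnDeriv Q.fst x ≠ ⊤)
      (by rw [hmap]; exact hbase)
  have h2 : ∀ᵐ z ∂P, 0 < Kernel.rnDeriv κ η z.1 z.2 ∧ Kernel.rnDeriv κ η z.1 z.2 ≠ ⊤ := by
    rw [← hP']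
    have hm := Kernel.measurable_rnDeriv κ η
    have hmeas : MeasurableSet {z : Z₀ × Zrest |
        0 < Kernel.rnDeriv κ η z.1 z.2 ∧ Kernel.rnDeriv κ η z.1 z.2 ≠ ⊤} :=
      (measurableSet_lt measurable_const hm).inter (hm (measurableSet_singleton ⊤)).compl
    have hin : ∀ᵐ x ∂π₀, ∀ᵐ y ∂κ x,
        0 < Kernel.rnDeriv κ η x y ∧ Kernel.rnDeriv κ η x y ≠ ⊤ := by
      filter_upwards [hae] with x hx
      filter_upwards [Kernel.rnDeriv_pos hx, hx.ae_le (Kernel.rnDeriv_ne_top κ η)] with y h h'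
      exact ⟨h, h'⟩
    exact Measure.ae_compProd_of_ae_ae hmeas hin
  -- a.e. additive decomposition of the log-likelihood ratio
  set F : Z₀ × Zrest → ℝ := fun z => Real.log (π₀.rnDeriv Q.fst z.1).toReal with hFdef
  set G : Z₀ × Zrest → ℝ := fun z => Real.log (Kernel.rnDeriv κ η z.1 z.2).toReal with hGdef
  have h_ae_add : (fun z => Real.log (P.rnDeriv Q z).toReal) =ᵐ[P] fun z => F z + G z := by
    filter_upwards [hDP, h1, h2] with z hz h1z h2z
    rw [hz, ENNReal.toReal_mul, hFdef, hGdef]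
    exact Real.log_mul (ENNReal.toReal_ne_zero.mpr ⟨h1z.1.ne', h1z.2⟩)
      (ENNReal.toReal_ne_zero.mpr ⟨h2z.1.ne', h2z.2⟩)
  have hF_meas : Measurable F :=
    ((Measure.measurable_rnDeriv π₀ Q.fst).comp measurable_fst).ennreal_toReal.log
  have hG_meas : Measurable G :=
    (Kernel.measurable_rnDeriv κ η).ennreal_toReal.log
  have hF_int : Integrable F P := by
    have hmap : P.map Prod.fst = π₀ := by rw [← hPfst]; rfl
    have : Integrable (fun x => Real.log (π₀.rnDeriv Q.fst x).toReal) (P.map Prod.fst) := by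
      rw [hmap]; exact hint_fst
    exact (integrable_map_measure
      ((Measure.measurable_rnDeriv π₀ Q.fst).ennreal_toReal.log
        ).aestronglyMeasurable measurable_fst.aemeasurable).mp this
  have hFG_int : Integrable (fun z => F z + G z) P := hint.congr h_ae_add
  have hG_int : Integrable G P := by
    have h := hFG_int.sub hF_int
    refine h.congr (ae_of_all _ fun z => ?_)
    simp
  -- conditional integrals
  have hGx : ∀ᵐ x ∂π₀, ∫ y, G (x, y) ∂κ x = klDiv (κ x) (η x) := by
    filter_upwards [hae] with x hx
    rw [klDiv]
    refine integral_congr_ae ?_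
    filter_upwards [hx.ae_le (Kernel.rnDeriv_eq_rnDeriv_measure (κ := κ) (η := η) (a := x))]
      with y hy
    rw [hGdef]; simp only
    rw [hy]
  have hG_int' : Integrable G (π₀ ⊗ₘ κ) := by rw [hP']; exact hG_int
  have h_intG : ∫ z, G z ∂P = ∫ x, klDiv (κ x) (η x) ∂π₀ := by
    rw [← hP', Measure.integral_compProd hG_int']
    exact integral_congr_ae hGx
  have h_intF : ∫ z, F z ∂P = klDiv π₀ Q.fst := by
    have hmap : P.map Prod.fst = π₀ := by rw [← hPfst]; rfl
    have hg_meas : Measurable fun x => Real.log ((π₀.rnDeriv Q.fst) x).toReal :=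
      (Measure.measurable_rnDeriv π₀ Q.fst).ennreal_toReal.log
    have hmi := integral_map (φ := Prod.fst) (μ := P)
      measurable_fst.aemeasurable hg_meas.aestronglyMeasurable
    rw [hmap] at hmi
    rw [klDiv, hmi]
  have hdec : klDiv P Q = klDiv π₀ Q.fst + ∫ x, klDiv (κ x) (η x) ∂π₀ := by
    rw [klDiv, integral_congr_ae h_ae_add, integral_add hF_int hG_int, h_intF, h_intG]
  have h_nonneg_ae : ∀ᵐ x ∂π₀, 0 ≤ klDiv (κ x) (η x) := by
    filter_upwards [hae] with x hx
    exact klDiv_nonneg_aux (κ x) (η x) hx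
  have h_nonneg : 0 ≤ ∫ x, klDiv (κ x) (η x) ∂π₀ := integral_nonneg_of_ae h_nonneg_ae
  refine ⟨hdec, by linarith, ?_, ?_⟩
  · -- forward direction
    intro h
    have hzero : ∫ x, klDiv (κ x) (η x) ∂π₀ = 0 := by linarith [hdec]
    have h_ae_zero : ∀ᵐ x ∂π₀, klDiv (κ x) (η x) = 0 := by
      have := (integral_eq_zero_iff_of_nonneg_ae h_nonneg_ae hint_cond).mp hzero
      filter_upwards [this] with x hx using hx
    -- a.e. integrability of the conditional llr
    have h_int_cond : ∀ᵐ x ∂π₀, Integrable (fun y => G (x, y)) (κ x) := by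
      have := (Measure.integrable_compProd_iff hG_meas.aestronglyMeasurable).mp hG_int'
      exact this.1
    have h_int_cond' : ∀ᵐ x ∂π₀,
        Integrable (fun y => Real.log ((κ x).rnDeriv (η x) y).toReal) (κ x) := by
      filter_upwards [h_int_cond, hae] with x hx hx'
      refine hx.congr ?_
      filter_upwards [hx'.ae_le (Kernel.rnDeriv_eq_rnDeriv_measure (κ := κ) (η := η) (a := x))]
        with y hy
      rw [hGdef]; simp only
      rw [hy]
    filter_upwards [hae, h_ae_zero, h_int_cond'] with x hx h0 hi
    exact (gibbs_aux (κ x) (η x) hx hi).2 h0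
  · -- backward direction
    intro h
    have : ∫ x, klDiv (κ x) (η x) ∂π₀ = 0 := by
      rw [integral_congr_ae (g := fun _ => (0 : ℝ)) ?_, integral_zero]
      filter_upwards [h] with x hx
      rw [hx]
      exact klDiv_self_aux (η x)
    rw [hdec, this, add_zero]
end

section
/- Pythagorean identity for the half-bridge projection: with Q a probability measure on Z_0 × Z_rest with marginal Q_0, π_0 ≪ Q_0, and P* the half-bridge solution dP*/dQ = dπ_0/dQ_0 ∘ proj_0, any probability measure P with initial marginal π_0 and P ≪ Q satisfies D_KL(P ‖ Q) = D_KL(P ‖ P*) + D_KL(P* ‖ Q). -/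
open MeasureTheory ENNReal

/-- Pythagorean identity for the half-bridge projection: with
`dP*/dQ = (dπ₀/dQ₀) ∘ proj₀`, any probability measure `P ≪ Q` with initial marginal `π₀`
satisfies `D_KL(P ‖ Q) = D_KL(P ‖ P*) + D_KL(P* ‖ Q)`. -/
theorem half_bridge_pythagorean
    {Z₀ Zrest : Type*} [MeasurableSpace Z₀] [MeasurableSpace Zrest]
    (Q : Measure (Z₀ × Zrest)) [IsProbabilityMeasure Q]
    (π₀ : Measure Z₀) [IsProbabilityMeasure π₀] (hπ₀ : π₀ ≪ Q.fst)
    (Pstar : Measure (Z₀ × Zrest))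
    (hPstar : Pstar = Q.withDensity fun z => π₀.rnDeriv Q.fst z.1)
    (P : Measure (Z₀ × Zrest)) [IsProbabilityMeasure P]
    (hPfst : P.fst = π₀) (hPQ : P ≪ Q)
    -- all divergences are assumed finite (integrability of the log-densities)
    (hint₁ : Integrable (fun z => Real.log (P.rnDeriv Q z).toReal) P)
    (hint₂ : Integrable (fun z => Real.log (P.rnDeriv Pstar z).toReal) P)
    (hint₃ : Integrable (fun z => Real.log (Pstar.rnDeriv Q z).toReal) Pstar) :
    klDiv P Q = klDiv P Pstar + klDiv Pstar Q := by
  set f : Z₀ → ENNReal := π₀.rnDeriv Q.fst with hf_def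
  have hf : Measurable f := Measure.measurable_rnDeriv _ _
  have hfF : Measurable fun z : Z₀ × Zrest => f z.1 := hf.comp measurable_fst
  have hπeq : Q.fst.withDensity f = π₀ := Measure.withDensity_rnDeriv_eq _ _ hπ₀
  -- the first marginal of Pstar is π₀
  have hfst : Pstar.fst = π₀ := by
    rw [hPstar]
    ext s hs
    rw [Measure.fst_apply hs, withDensity_apply _ (measurable_fst hs)]
    have : ∫⁻ z in Prod.fst ⁻¹' s, f z.1 ∂Q = ∫⁻ x in s, f x ∂Q.fst := by
      rw [Measure.fst, setLIntegral_map hs hf measurable_fst]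
    rw [this, ← hπeq, withDensity_apply _ hs]
  -- Pstar ≪ Q
  have hPstarQ : Pstar ≪ Q := by
    rw [hPstar]; exact withDensity_absolutelyContinuous _ _
  have hPstarProb : IsProbabilityMeasure Pstar := by
    constructor
    rw [← Measure.fst_univ, hfst]
    exact measure_univ
  -- P gives no mass to {f ∘ fst = 0}
  have hS : MeasurableSet {z : Z₀ × Zrest | f z.1 = 0} :=
    hfF (measurableSet_singleton 0)
  have hS0 : MeasurableSet {x : Z₀ | f x = 0} := hf (measurableSet_singleton 0)
  have hnull : P {z : Z₀ × Zrest | f z.1 = 0} = 0 := by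
    have h0 : π₀ {x : Z₀ | f x = 0} = 0 := by
      rw [← hπeq, withDensity_apply _ hS0]
      rw [setLIntegral_eq_zero_iff hS0 hf]
      exact Filter.Eventually.of_forall fun x hx => hx
    have : P {z : Z₀ × Zrest | f z.1 = 0} = P.fst {x : Z₀ | f x = 0} := by
      rw [Measure.fst_apply hS0]
      rfl
    rw [this, hPfst, h0]
  -- P ≪ Pstar
  have hPPstar : P ≪ Pstar := by
    intro A hA
    set B := toMeasurable Pstar A with hB
    have hBm : MeasurableSet B := measurableSet_toMeasurable _ _
    have hBnull : Pstar B = 0 := by rw [measure_toMeasurable]; exact hA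
    have hABsub : A ⊆ B := subset_toMeasurable _ _
    have hint : ∫⁻ z in B, f z.1 ∂Q = 0 := by
      rw [← withDensity_apply _ hBm, ← hPstar]; exact hBnull
    have hae : (fun z : Z₀ × Zrest => f z.1) =ᵐ[Q.restrict B] 0 :=
      (lintegral_eq_zero_iff hfF).mp hint
    have hQB : Q ({z : Z₀ × Zrest | f z.1 ≠ 0} ∩ B) = 0 := by
      have hSc : MeasurableSet {z : Z₀ × Zrest | f z.1 ≠ 0} :=
        hfF (measurableSet_singleton 0).compl
      have h := ae_iff.mp hae
      rw [Measure.restrict_apply' hBm] at h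
      simpa using h
    have hPB : P B = 0 := by
      have h1 : P ({z : Z₀ × Zrest | f z.1 ≠ 0} ∩ B) = 0 := hPQ hQB
      have h2 : P ({z : Z₀ × Zrest | f z.1 = 0} ∩ B) = 0 :=
        measure_mono_null Set.inter_subset_left hnull
      have hcover : B ⊆ ({z : Z₀ × Zrest | f z.1 ≠ 0} ∩ B) ∪
          ({z : Z₀ × Zrest | f z.1 = 0} ∩ B) := by
        intro z hz
        by_cases h : f z.1 = 0
        · exact Or.inr ⟨h, hz⟩
        · exact Or.inl ⟨h, hz⟩
      exact le_antisymm (le_trans (measure_mono hcover)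
        (le_trans (measure_union_le _ _) (by rw [h1, h2, add_zero]))) zero_le
    exact measure_mono_null hABsub hPB
  -- rnDeriv identities
  have h1 : Pstar.rnDeriv Q =ᵐ[Q] fun z => f z.1 := by
    rw [hPstar]; exact Measure.rnDeriv_withDensity Q hfF
  have hmul : P.rnDeriv Pstar * Pstar.rnDeriv Q =ᵐ[Q] P.rnDeriv Q :=
    Measure.rnDeriv_mul_rnDeriv hPPstar
  -- a.e. facts under P
  have hposP : ∀ᵐ z ∂P, 0 < P.rnDeriv Pstar z := Measure.rnDeriv_pos hPPstar
  have hfinP : ∀ᵐ z ∂P, P.rnDeriv Pstar z ≠ ∞ :=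
    hPPstar.ae_le (Measure.rnDeriv_ne_top P Pstar)
  have hfne0P : ∀ᵐ z ∂P, f z.1 ≠ 0 := by
    rw [ae_iff]; simpa using hnull
  have hfneTopQ : ∀ᵐ z ∂Q, f z.1 ≠ ∞ := by
    have hTm : MeasurableSet {x : Z₀ | f x = ∞} := hf (measurableSet_singleton ∞)
    have h0 : Q.fst {x : Z₀ | f x = ∞} = 0 := by
      simpa [ae_iff, not_not] using Measure.rnDeriv_ne_top π₀ Q.fst
    have h1' : Q (Prod.fst ⁻¹' {x : Z₀ | f x = ∞}) = 0 := by
      rw [← Measure.fst_apply hTm]; exact h0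
    rw [ae_iff]
    simpa [Set.preimage_setOf_eq, not_not] using h1'
  have hfneTopP : ∀ᵐ z ∂P, f z.1 ≠ ∞ := hPQ.ae_le hfneTopQ
  -- the pointwise log decomposition, a.e. P
  have hlog : ∀ᵐ z ∂P, Real.log (P.rnDeriv Q z).toReal =
      Real.log (P.rnDeriv Pstar z).toReal + Real.log (f z.1).toReal := by
    filter_upwards [hPQ.ae_le hmul, hPQ.ae_le h1, hposP, hfinP, hfne0P, hfneTopP] with z
      hz1 hz2 hz3 hz4 hz5 hz6
    rw [← hz1, Pi.mul_apply, hz2, ENNReal.toReal_mul, Real.log_mul]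
    · exact ENNReal.toReal_ne_zero.mpr ⟨hz3.ne', hz4⟩
    · exact ENNReal.toReal_ne_zero.mpr ⟨hz5, hz6⟩
  -- integrability of the marginal log-density term
  have hintf : Integrable (fun z => Real.log (f z.1).toReal) P := by
    refine Integrable.congr (hint₁.sub hint₂) ?_
    filter_upwards [hlog] with z hz
    simp only [Pi.sub_apply]
    rw [hz]; ring
  -- split the integral
  have hsplit : klDiv P Q = klDiv P Pstar + ∫ z, Real.log (f z.1).toReal ∂P := by
    unfold klDiv
    rw [integral_congr_ae hlog, integral_add hint₂ hintf]
  -- the marginal integrals agree: ∫ log f ∘ fst dP = ∫ log f ∘ fst dPstar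
  have hsm : StronglyMeasurable fun x : Z₀ => Real.log (f x).toReal :=
    (Real.measurable_log.comp (hf.ennreal_toReal)).stronglyMeasurable
  have hmargP : ∫ z, Real.log (f z.1).toReal ∂P = ∫ x, Real.log (f x).toReal ∂π₀ := by
    rw [← hPfst, Measure.fst,
      integral_map measurable_fst.aemeasurable hsm.aestronglyMeasurable]
  have hmargPstar : ∫ z, Real.log (f z.1).toReal ∂Pstar =
      ∫ x, Real.log (f x).toReal ∂π₀ := by
    rw [← hfst, Measure.fst,
      integral_map measurable_fst.aemeasurable hsm.aestronglyMeasurable]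
  have hklPstar : klDiv Pstar Q = ∫ z, Real.log (f z.1).toReal ∂Pstar := by
    unfold klDiv
    refine integral_congr_ae ?_
    filter_upwards [hPstarQ.ae_le h1] with z hz
    rw [hz]
  rw [hsplit, hklPstar, hmargP, hmargPstar]
end
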